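/- arXiv:math/9502207 — 6 statements merged into one kernel-verified Lean document; each statement's English description precedes it below -/
import Mathlib

section
/- Let Y be a hereditarily indecomposable complex Banach space, W a Banach space, S : Y → W a bounded linear operator, and Z an infinite-dimensional closed subspace of Y. If the restriction of S to Z is strictly singular, then S is strictly singular. -/
open Filter Topology

noncomputable section

variable {E F : Type*}

def IsInfDimClosed [NormedAddCommGroup E] [NormedSpace ℂ E] (M : Submodule ℂ E) : Prop :=
  IsClosed (M : Set E) ∧ ¬ FiniteDimensional ℂ M

def HI (E : Type*) [NormedAddCommGroup E] [NormedSpace ℂ E] : Prop :=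
  ∀ M N : Submodule ℂ E, IsInfDimClosed M → IsInfDimClosed N → ∀ ε > 0,
    ∃ u ∈ M, ∃ v ∈ N, ‖u‖ = 1 ∧ ‖v‖ = 1 ∧ ‖u - v‖ ≤ ε

def StrictlySingular [NormedAddCommGroup E] [NormedSpace ℂ E]
    [NormedAddCommGroup F] [NormedSpace ℂ F] (S : E →L[ℂ] F) : Prop :=
  ∀ M : Submodule ℂ E, IsInfDimClosed M → ∀ c > 0, ∃ x ∈ M, ‖S x‖ < c * ‖x‖

def IsNBasic2 [NormedAddCommGroup E] [NormedSpace ℂ E] (y : ℕ → E) : Prop :=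
  (∀ i, ‖y i‖ = 1) ∧ ∀ (a : ℕ → ℂ) (m n : ℕ), m ≤ n →
    ‖∑ i ∈ Finset.range m, a i • y i‖ ≤ 2 * ‖∑ i ∈ Finset.range n, a i • y i‖

def IsBlockOf [NormedAddCommGroup E] [NormedSpace ℂ E] (w z : ℕ → E) : Prop :=
  ∃ (a : ℕ → ℂ) (F : ℕ → Finset ℕ), (∀ k, (F k).Nonempty) ∧
    (∀ k i j, i ∈ F k → j ∈ F (k+1) → i < j) ∧
    (∀ k, w k = ∑ i ∈ F k, a i • z i) ∧ (∀ k, w k ≠ 0)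

def IsNBlockOf [NormedAddCommGroup E] [NormedSpace ℂ E] (w z : ℕ → E) : Prop :=
  IsBlockOf w z ∧ ∀ k, ‖w k‖ = 1

def cSpan [NormedAddCommGroup E] [NormedSpace ℂ E] (y : ℕ → E) : Submodule ℂ E :=
  (Submodule.span ℂ (Set.range y)).topologicalClosure

def tailSpan [NormedAddCommGroup E] [NormedSpace ℂ E] (y : ℕ → E) (k : ℕ) : Submodule ℂ E :=
  cSpan (fun i => y (i + k))

theorem mem_cSpan [NormedAddCommGroup E] [NormedSpace ℂ E] (y : ℕ → E) (i : ℕ) :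
    y i ∈ cSpan y :=
  (Submodule.span ℂ (Set.range y)).le_topologicalClosure (Submodule.subset_span ⟨i, rfl⟩)

theorem tailSpan_le [NormedAddCommGroup E] [NormedSpace ℂ E] (y : ℕ → E) (k : ℕ) :
    tailSpan y k ≤ cSpan y :=
  Submodule.topologicalClosure_mono (Submodule.span_mono (by rintro _ ⟨i, rfl⟩; exact ⟨i + k, rfl⟩))

def inclCLM [NormedAddCommGroup E] [NormedSpace ℂ E] {M N : Submodule ℂ E} (h : M ≤ N) :
    M →L[ℂ] N :=
  LinearMap.mkContinuous (Submodule.inclusion h) 1 (by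
    intro x
    simp [Submodule.inclusion])

/-!
As `S` is strictly singular on `Z`, one picks inductively vectors `z i ∈ Z` and functionals `f i`
with `f i (z j) = δ i j` and `‖f i‖ * ‖S (z i)‖ ≤ ε / 2 ^ (i + 1)`: the new vector lies in the
kernels of the old functionals and of a continuous projection onto the span of the old vectors,
and the new functional is a norming functional composed with the complementary projection.
The `f i` recover the coefficients of `x` in the closed span `N` of the `z i`, whence
`‖S x‖ ≤ ε * ‖x‖` on `N`. Given an infinite-dimensional closed `M`, hereditary indecomposability
yields unit vectors `u ∈ M`, `v ∈ N` with `‖u - v‖` small, so `‖S u‖ ≤ ‖S‖ * ‖u - v‖ + ε` is small.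
-/

theorem exists_dual_eq_one {𝕜 : Type*} [RCLike 𝕜] [NormedAddCommGroup E] [NormedSpace 𝕜 E]
    {x : E} (hx : x ≠ 0) : ∃ φ : StrongDual 𝕜 E, φ x = 1 ∧ ‖φ‖ * ‖x‖ ≤ 1 := by
  obtain ⟨φ, hφ1, hφx⟩ := exists_dual_vector'' 𝕜 x
  have hx' : 0 < ‖x‖ := norm_pos_iff.2 hx
  refine ⟨((‖x‖ : 𝕜)⁻¹) • φ, by simp [hφx, hx'.ne'], ?_⟩
  calc ‖((‖x‖ : 𝕜)⁻¹) • φ‖ * ‖x‖ = ‖φ‖ := by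
        rw [norm_smul, norm_inv, RCLike.norm_ofReal, abs_of_pos hx']; field_simp
    _ ≤ 1 := hφ1

section Biorthogonal

variable {Y W ι : Type*} [NormedAddCommGroup Y] [NormedSpace ℂ Y]
  [NormedAddCommGroup W] [NormedSpace ℂ W]

theorem apply_linearCombination_of_biorthogonal [DecidableEq ι] {z : ι → Y}
    {f : ι → StrongDual ℂ Y} (hbio : ∀ i j, f i (z j) = if i = j then 1 else 0)
    (c : ι →₀ ℂ) (i : ι) : f i (Finsupp.linearCombination ℂ z c) = c i := by
  simp [Finsupp.linearCombination_apply, Finsupp.sum, hbio, eq_comm]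

theorem linearIndependent_of_biorthogonal [DecidableEq ι] {z : ι → Y}
    {f : ι → StrongDual ℂ Y} (hbio : ∀ i j, f i (z j) = if i = j then 1 else 0) :
    LinearIndependent ℂ z :=
  linearIndependent_iff.2 fun c hc => Finsupp.ext fun i => by
    simpa [hc] using (apply_linearCombination_of_biorthogonal hbio c i).symm

theorem not_finiteDimensional_cSpan {z : ℕ → Y} (hz : LinearIndependent ℂ z) :
    ¬ FiniteDimensional ℂ (cSpan z) := fun _ =>
  have hz' : LinearIndependent ℂ fun i => (⟨z i, mem_cSpan z i⟩ : cSpan z) :=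
    .of_comp (cSpan z).subtype hz
  hz'.finite.false

theorem norm_apply_le_of_biorthogonal {z : ℕ → Y} {f : ℕ → StrongDual ℂ Y}
    (hbio : ∀ i j, f i (z j) = if i = j then 1 else 0) (T : Y →L[ℂ] W) {C : ℝ}
    (hC : ∀ s : Finset ℕ, ∑ i ∈ s, ‖f i‖ * ‖T (z i)‖ ≤ C) :
    ∀ x ∈ cSpan z, ‖T x‖ ≤ C * ‖x‖ := by
  have hspan : ∀ x ∈ Submodule.span ℂ (Set.range z), ‖T x‖ ≤ C * ‖x‖ := by
    intro x hx
    obtain ⟨c, rfl⟩ := Finsupp.mem_span_range_iff_exists_finsupp.1 hx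
    set x := c.sum fun i a => a • z i
    have hcoef : ∀ i, ‖c i‖ ≤ ‖f i‖ * ‖x‖ := fun i => by
      rw [← apply_linearCombination_of_biorthogonal hbio c i]
      exact (f i).le_opNorm x
    calc ‖T x‖ = ‖∑ i ∈ c.support, c i • T (z i)‖ := by simp [x, Finsupp.sum]
      _ ≤ ∑ i ∈ c.support, ‖c i‖ * ‖T (z i)‖ :=
          norm_sum_le_of_le _ fun i _ => (norm_smul _ _).le
      _ ≤ ∑ i ∈ c.support, ‖f i‖ * ‖T (z i)‖ * ‖x‖ := Finset.sum_le_sum fun i _ => by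
          rw [mul_right_comm]; gcongr; exact hcoef i
      _ = (∑ i ∈ c.support, ‖f i‖ * ‖T (z i)‖) * ‖x‖ := (Finset.sum_mul _ _ _).symm
      _ ≤ C * ‖x‖ := by gcongr; exact hC _
  intro x hx
  rw [cSpan, ← SetLike.mem_coe, Submodule.topologicalClosure_coe] at hx
  exact closure_minimal hspan
    (isClosed_le T.continuous.norm (continuous_const.mul continuous_norm)) hx

end Biorthogonal

section StrictlySingular

variable {Y W : Type*} [NormedAddCommGroup Y] [NormedSpace ℂ Y]
  [NormedAddCommGroup W] [NormedSpace ℂ W]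

theorem IsInfDimClosed.inf_ker {F : Type*} [NormedAddCommGroup F] [NormedSpace ℂ F]
    [FiniteDimensional ℂ F] {V : Submodule ℂ Y} (hV : IsInfDimClosed V) (g : Y →L[ℂ] F) :
    IsInfDimClosed (V ⊓ g.ker) := by
  refine ⟨hV.1.inter g.isClosed_ker, fun hfin => hV.2 ?_⟩
  rw [← Submodule.fg_iff_finiteDimensional] at hfin ⊢
  exact Submodule.fg_of_fg_map_of_fg_inf_ker (g : Y →ₗ[ℂ] F) (IsNoetherian.noetherian _) hfin

theorem exists_mem_norm_lt_of_strictlySingular_comp_subtypeL {S : Y →L[ℂ] W}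
    {Z : Submodule ℂ Y} (hS : StrictlySingular (S.comp Z.subtypeL))
    {V : Submodule ℂ Y} (hVZ : V ≤ Z) (hV : IsInfDimClosed V) {c : ℝ} (hc : 0 < c) :
    ∃ x ∈ V, ‖S x‖ < c * ‖x‖ := by
  have hV' : IsInfDimClosed (V.comap Z.subtype) :=
    ⟨hV.1.preimage continuous_subtype_val,
      fun _ => hV.2 (Submodule.comapSubtypeEquivOfLe hVZ).finiteDimensional⟩
  obtain ⟨x, hx, hSx⟩ := hS _ hV' c hc
  exact ⟨x, hx, hSx⟩

theorem exists_biorthogonal_pair_norm_mul_le {S : Y →L[ℂ] W} {Z : Submodule ℂ Y}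
    (hZ : IsInfDimClosed Z) (hS : StrictlySingular (S.comp Z.subtypeL))
    (E : Submodule ℂ Y) [FiniteDimensional ℂ E]
    {F : Type*} [NormedAddCommGroup F] [NormedSpace ℂ F] [FiniteDimensional ℂ F]
    (g : Y →L[ℂ] F) {η : ℝ} (hη : 0 < η) :
    ∃ x, g x = 0 ∧
      ∃ f : StrongDual ℂ Y, f x = 1 ∧ (∀ e ∈ E, f e = 0) ∧ ‖f‖ * ‖S x‖ ≤ η := by
  obtain ⟨P, hP⟩ := Submodule.ClosedComplemented.of_finiteDimensional E
  set Q := ContinuousLinearMap.id ℂ Y - E.subtypeL.comp P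
  obtain ⟨x, ⟨⟨-, hgx⟩, hPx⟩, hSx⟩ := exists_mem_norm_lt_of_strictlySingular_comp_subtypeL
    hS (inf_le_left.trans inf_le_left) ((hZ.inf_ker g).inf_ker P) (c := η / (‖Q‖ + 1))
    (by positivity)
  have hx0 : x ≠ 0 := by rintro rfl; simp at hSx
  obtain ⟨φ, hφx, hφ⟩ := exists_dual_eq_one (𝕜 := ℂ) hx0
  have hQx : Q x = x := by simp [Q, show P x = 0 from hPx]
  refine ⟨x, hgx, φ.comp Q, by simp [hQx, hφx], fun e he => by simp [Q, hP ⟨e, he⟩], ?_⟩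
  have hQ : ‖Q‖ / (‖Q‖ + 1) ≤ 1 := (div_le_one (by positivity)).2 (by linarith)
  calc ‖φ.comp Q‖ * ‖S x‖ ≤ ‖φ‖ * ‖Q‖ * (η / (‖Q‖ + 1) * ‖x‖) := by
        gcongr
        exact φ.opNorm_comp_le Q
    _ = ‖φ‖ * ‖x‖ * (‖Q‖ / (‖Q‖ + 1)) * η := by ring
    _ ≤ 1 * 1 * η := by gcongr
    _ = η := by ring

theorem exists_biorthogonal_seq_norm_mul_le {S : Y →L[ℂ] W} {Z : Submodule ℂ Y}
    (hZ : IsInfDimClosed Z) (hS : StrictlySingular (S.comp Z.subtypeL)) {ε : ℝ} (hε : 0 < ε) :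
    ∃ (z : ℕ → Y) (f : ℕ → StrongDual ℂ Y), (∀ i j, f i (z j) = if i = j then 1 else 0) ∧
      ∀ i, ‖f i‖ * ‖S (z i)‖ ≤ ε / 2 / 2 ^ i := by
  -- In a triple `(n, x, φ)`, `n` is the exponent of the weight; it increases along the sequence.
  let P : ℕ × Y × StrongDual ℂ Y → Prop := fun t =>
    t.2.2 t.2.1 = 1 ∧ ‖t.2.2‖ * ‖S t.2.1‖ ≤ ε / 2 / 2 ^ t.1
  let r : ℕ × Y × StrongDual ℂ Y → ℕ × Y × StrongDual ℂ Y → Prop := fun t t' =>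
    t.1 < t'.1 ∧ t.2.2 t'.2.1 = 0 ∧ t'.2.2 t.2.1 = 0
  obtain ⟨q, hqP, hqr⟩ := exists_seq_of_forall_finset_exists P r fun s _ => by
    let E := Submodule.span ℂ ((fun t => t.2.1) '' (s : Set (ℕ × Y × StrongDual ℂ Y)))
    have : FiniteDimensional ℂ E := FiniteDimensional.span_of_finite ℂ (s.finite_toSet.image _)
    let n := s.sup Prod.fst + 1
    obtain ⟨x, hgx, φ, hφx, hφE, hφS⟩ := exists_biorthogonal_pair_norm_mul_le hZ hS E
      (ContinuousLinearMap.pi fun t : s => t.1.2.2) (η := ε / 2 / 2 ^ n) (by positivity)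
    refine ⟨(n, x, φ), ⟨hφx, hφS⟩, fun t ht => ⟨Nat.lt_succ_of_le (s.le_sup ht), ?_, ?_⟩⟩
    · exact congr_fun hgx ⟨t, ht⟩
    · exact hφE _ (Submodule.subset_span ⟨t, ht, rfl⟩)
  refine ⟨fun i => (q i).2.1, fun i => (q i).2.2, fun i j => ?_, fun i => ?_⟩
  · rcases lt_trichotomy i j with h | rfl | h
    · simp [h.ne, (hqr i j h).2.1]
    · simp [(hqP i).1]
    · simp [h.ne', (hqr j i h).2.2]
  · have hmono : StrictMono fun i => (q i).1 := fun i j h => (hqr i j h).1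
    calc ‖(q i).2.2‖ * ‖S (q i).2.1‖ ≤ ε / 2 / 2 ^ (q i).1 := (hqP i).2
      _ ≤ ε / 2 / 2 ^ i := by gcongr; norm_num; exact hmono.le_apply

theorem exists_infDimClosed_norm_le_of_strictlySingular_comp_subtypeL {S : Y →L[ℂ] W}
    {Z : Submodule ℂ Y} (hZ : IsInfDimClosed Z) (hS : StrictlySingular (S.comp Z.subtypeL))
    {ε : ℝ} (hε : 0 < ε) :
    ∃ N : Submodule ℂ Y, IsInfDimClosed N ∧ ∀ x ∈ N, ‖S x‖ ≤ ε * ‖x‖ := by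
  obtain ⟨z, f, hbio, hbound⟩ := exists_biorthogonal_seq_norm_mul_le hZ hS hε
  refine ⟨cSpan z, ⟨Submodule.isClosed_topologicalClosure _,
    not_finiteDimensional_cSpan (linearIndependent_of_biorthogonal hbio)⟩,
    norm_apply_le_of_biorthogonal hbio S fun s => ?_⟩
  calc ∑ i ∈ s, ‖f i‖ * ‖S (z i)‖ ≤ ∑ i ∈ s, ε / 2 / 2 ^ i :=
        Finset.sum_le_sum fun i _ => hbound i
    _ ≤ ε := sum_le_hasSum s (fun i _ => by positivity) (hasSum_geometric_two' ε)

theorem HI.strictlySingular_of_forall_exists_norm_le (hY : HI Y) {S : Y →L[ℂ] W}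
    (h : ∀ ε > 0, ∃ N : Submodule ℂ Y, IsInfDimClosed N ∧ ∀ x ∈ N, ‖S x‖ ≤ ε * ‖x‖) :
    StrictlySingular S := by
  intro M hM c hc
  obtain ⟨N, hN, hSN⟩ := h (c / 2) (by positivity)
  obtain ⟨u, hu, v, hv, hu1, hv1, huv⟩ := hY M N hM hN (c / 2 / (‖S‖ + 1)) (by positivity)
  refine ⟨u, hu, ?_⟩
  have hSuv : ‖S‖ * ‖u - v‖ < c / 2 := by
    calc ‖S‖ * ‖u - v‖ ≤ ‖S‖ * (c / 2 / (‖S‖ + 1)) := by gcongr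
      _ < (‖S‖ + 1) * (c / 2 / (‖S‖ + 1)) := by gcongr; linarith
      _ = c / 2 := by field_simp
  calc ‖S u‖ = ‖S (u - v) + S v‖ := by rw [map_sub, sub_add_cancel]
    _ ≤ ‖S‖ * ‖u - v‖ + c / 2 * ‖v‖ := norm_add_le_of_le (S.le_opNorm _) (hSN v hv)
    _ < c * ‖u‖ := by rw [hu1, hv1]; linarith

end StrictlySingular

theorem statement0_general {Y W : Type*} [NormedAddCommGroup Y] [NormedSpace ℂ Y]
    [NormedAddCommGroup W] [NormedSpace ℂ W]
    (hY : HI Y) (S : Y →L[ℂ] W) (Z : Submodule ℂ Y) (hZ : IsInfDimClosed Z)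
    (hres : StrictlySingular (S.comp Z.subtypeL)) : StrictlySingular S :=
  hY.strictlySingular_of_forall_exists_norm_le fun _ hε =>
    exists_infDimClosed_norm_le_of_strictlySingular_comp_subtypeL hZ hres hε

theorem statement0 {Y W : Type*} [NormedAddCommGroup Y] [NormedSpace ℂ Y] [CompleteSpace Y]
    [NormedAddCommGroup W] [NormedSpace ℂ W] [CompleteSpace W]
    (hY : HI Y) (S : Y →L[ℂ] W) (Z : Submodule ℂ Y) (hZ : IsInfDimClosed Z)
    (hres : StrictlySingular (S.comp Z.subtypeL)) : StrictlySingular S :=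
  statement0_general hY S Z hZ hres
end
end

section
/- Let Y be a hereditarily indecomposable Banach space, W a Banach space, and Z an infinite-dimensional closed subspace of Y. A bounded linear operator S : Y → W is strictly singular if and only if its restriction to Z is strictly singular. -/
open Filter Topology

noncomputable section

variable {E F : Type*}

/-! If `S` is strictly singular on `Z`, then for every `δ > 0` one picks inductively unit vectors
`zₙ ∈ Z` with `‖S zₙ‖ ≤ δ/2 · 4⁻ⁿ`, each in the common kernel of norming functionals `fₖ` of the
earlier `zₖ`. The triangular relations `fₙ zₙ = 1`, `fₙ zₘ = 0` (`n < m`) bound the coefficients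
of `x = ∑ cᵢ zᵢ` by `‖cₘ‖ ≤ 2ᵐ ‖x‖`, so `S` has norm at most `δ` on the closed span of the `zₙ`,
an infinite-dimensional subspace. By hereditary indecomposability every infinite-dimensional
closed subspace contains unit vectors arbitrarily close to that span, where `S` is small. -/

section

variable [NormedAddCommGroup E] [NormedSpace ℂ E] [NormedAddCommGroup F] [NormedSpace ℂ F]

namespace IsInfDimClosed

theorem map_subtype {Z : Submodule ℂ E} (hZ : IsClosed (Z : Set E)) {M : Submodule ℂ Z}
    (hM : IsInfDimClosed M) : IsInfDimClosed (M.map Z.subtype) :=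
  ⟨hZ.isClosedEmbedding_subtypeVal.isClosedMap _ hM.1, fun _ =>
    hM.2 (Module.Finite.equiv (Submodule.equivMapOfInjective _ Z.injective_subtype M).symm)⟩

theorem comap_subtype {V Z : Submodule ℂ E} (hV : IsInfDimClosed V) (hVZ : V ≤ Z) :
    IsInfDimClosed (V.comap Z.subtype) := by
  refine ⟨hV.1.preimage continuous_subtype_val, fun h => hV.2 ?_⟩
  rw [← inf_eq_right.2 hVZ, ← Submodule.map_comap_subtype]
  infer_instance

theorem inf_ker_s1 {V : Submodule ℂ E} (hV : IsInfDimClosed V) (g : StrongDual ℂ E) :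
    IsInfDimClosed (V ⊓ LinearMap.ker (g : E →ₗ[ℂ] ℂ)) := by
  refine ⟨hV.1.inter g.isClosed_ker, fun hfin => hV.2 ?_⟩
  by_cases hg : ∀ x ∈ V, g x = 0
  · rwa [inf_eq_left.2 fun x hx => hg x hx] at hfin
  push Not at hg
  obtain ⟨v, hv, hgv⟩ := hg
  refine Submodule.finiteDimensional_of_le (S₂ := V ⊓ LinearMap.ker (g : E →ₗ[ℂ] ℂ) ⊔ ℂ ∙ v)
    fun x hx => ?_
  rw [← sub_add_cancel x ((g x / g v) • v)]
  refine Submodule.add_mem_sup ⟨V.sub_mem hx (V.smul_mem _ hv), ?_⟩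
    (Submodule.smul_mem _ _ (Submodule.mem_span_singleton_self v))
  simp [div_mul_cancel₀ _ hgv]

end IsInfDimClosed

namespace StrictlySingular

theorem exists_norm_eq_one {T : E →L[ℂ] F} (hT : StrictlySingular T) {M : Submodule ℂ E}
    (hM : IsInfDimClosed M) {c : ℝ} (hc : 0 < c) : ∃ x ∈ M, ‖x‖ = 1 ∧ ‖T x‖ < c := by
  obtain ⟨x, hxM, hx⟩ := hT M hM c hc
  have hx0 : x ≠ 0 := by
    rintro rfl
    simp at hx
  refine ⟨(‖x‖⁻¹ : ℂ) • x, M.smul_mem _ hxM, norm_smul_inv_norm hx0, ?_⟩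
  rw [map_smul, norm_smul, norm_inv, Complex.norm_real, norm_norm,
    inv_mul_lt_iff₀ (norm_pos_iff.2 hx0), mul_comm]
  exact hx

theorem comp_subtypeL {S : E →L[ℂ] F} (hS : StrictlySingular S) {Z : Submodule ℂ E}
    (hZ : IsClosed (Z : Set E)) : StrictlySingular (S.comp Z.subtypeL) := by
  intro M hM c hc
  obtain ⟨_, ⟨x, hxM, rfl⟩, hx⟩ := hS _ (hM.map_subtype hZ) c hc
  exact ⟨x, hxM, hx⟩

end StrictlySingular

structure IsTriangularSystem (z : ℕ → E) (f : ℕ → StrongDual ℂ E) : Prop where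
  norm_eq_one : ∀ n, ‖z n‖ = 1
  norm_le_one : ∀ n, ‖f n‖ ≤ 1
  apply_self : ∀ n, f n (z n) = 1
  apply_of_lt : ∀ {n m}, n < m → f n (z m) = 0

namespace IsTriangularSystem

variable {z : ℕ → E} {f : ℕ → StrongDual ℂ E}

theorem norm_apply_le (h : IsTriangularSystem z f) (n : ℕ) (x : E) : ‖f n x‖ ≤ ‖x‖ :=
  ((f n).le_opNorm x).trans (mul_le_of_le_one_left (norm_nonneg x) (h.norm_le_one n))

theorem norm_coeff_le (h : IsTriangularSystem z f) (s : Finset ℕ) (c : ℕ → ℂ) {m : ℕ}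
    (hm : m ∈ s) : ‖c m‖ ≤ 2 ^ m * ‖∑ i ∈ s, c i • z i‖ := by
  set x := ∑ i ∈ s, c i • z i
  induction m using Nat.strong_induction_on with
  | _ m ih =>
  set t := (s.erase m).filter (· < m)
  have hfx : f m x = c m + ∑ i ∈ t, c i * f m (z i) := by
    have hvanish : ∀ i ∈ s.erase m, c i * f m (z i) ≠ 0 → i < m := fun i hi hne => by
      by_contra hle
      have hmi : m < i := lt_of_le_of_ne (not_lt.1 hle) (Finset.ne_of_mem_erase hi).symm
      exact hne (by rw [h.apply_of_lt hmi, mul_zero])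
    simp only [x, map_sum, map_smul, smul_eq_mul]
    rw [← Finset.add_sum_erase s _ hm, h.apply_self, mul_one, Finset.sum_filter_of_ne hvanish]
  have hearlier : ∑ i ∈ t, ‖c i * f m (z i)‖ ≤ ∑ i ∈ Finset.range m, 2 ^ i * ‖x‖ :=
    calc ∑ i ∈ t, ‖c i * f m (z i)‖ ≤ ∑ i ∈ t, 2 ^ i * ‖x‖ := by
          refine Finset.sum_le_sum fun i hi => ?_
          obtain ⟨his, him⟩ := Finset.mem_filter.1 hi
          have hfzi : ‖f m (z i)‖ ≤ 1 := by simpa [h.norm_eq_one] using h.norm_apply_le m (z i)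
          rw [norm_mul]
          exact (mul_le_of_le_one_right (norm_nonneg _) hfzi).trans
            (ih i him (Finset.mem_of_mem_erase his))
      _ ≤ ∑ i ∈ Finset.range m, 2 ^ i * ‖x‖ :=
          Finset.sum_le_sum_of_subset_of_nonneg
            (fun i hi => Finset.mem_range.2 (Finset.mem_filter.1 hi).2) fun _ _ _ => by positivity
  calc ‖c m‖ = ‖f m x - ∑ i ∈ t, c i * f m (z i)‖ := by rw [hfx, add_sub_cancel_right]
    _ ≤ ‖x‖ + ∑ i ∈ Finset.range m, 2 ^ i * ‖x‖ :=
        (norm_sub_le _ _).trans (add_le_add (h.norm_apply_le m x) ((norm_sum_le _ _).trans hearlier))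
    _ = 2 ^ m * ‖x‖ := by
        rw [← Finset.sum_mul, geom_sum_eq (by norm_num : (2 : ℝ) ≠ 1)]
        ring

theorem linearIndependent (h : IsTriangularSystem z f) : LinearIndependent ℂ z :=
  linearIndependent_iff'.2 fun s c hc _ hi =>
    norm_le_zero_iff.1 (by simpa [hc] using h.norm_coeff_le s c hi)

theorem isInfDimClosed_cSpan (h : IsTriangularSystem z f) : IsInfDimClosed (cSpan z) :=
by
  have hli : LinearIndependent ℂ fun i => (⟨z i, mem_cSpan z i⟩ : cSpan z) :=
    .of_comp (cSpan z).subtype h.linearIndependent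
  exact ⟨Submodule.isClosed_topologicalClosure _, fun _ =>
    Module.Finite.not_linearIndependent_of_infinite _ hli⟩

theorem norm_apply_le_of_mem_cSpan (h : IsTriangularSystem z f) (S : E →L[ℂ] F) {δ : ℝ}
    (hδ : 0 ≤ δ) (hS : ∀ n, ‖S (z n)‖ ≤ δ / 2 * (1 / 4) ^ n) {x : E} (hx : x ∈ cSpan z) :
    ‖S x‖ ≤ δ * ‖x‖ := by
  have hspan : ∀ x ∈ Submodule.span ℂ (Set.range z), ‖S x‖ ≤ δ * ‖x‖ := by
    intro x hx
    obtain ⟨l, rfl⟩ := Finsupp.mem_span_range_iff_exists_finsupp.1 hx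
    set x := l.sum fun i a => a • z i
    calc ‖S x‖ ≤ ∑ i ∈ l.support, ‖l i‖ * ‖S (z i)‖ := by
          simp only [x, Finsupp.sum, map_sum, map_smul, ← norm_smul]
          exact norm_sum_le _ _
      _ ≤ ∑ i ∈ l.support, 2 ^ i * ‖x‖ * (δ / 2 * (1 / 4) ^ i) :=
          Finset.sum_le_sum fun i hi => mul_le_mul (h.norm_coeff_le _ _ hi) (hS i)
            (norm_nonneg _) (by positivity)
      _ = δ / 2 * ‖x‖ * ∑ i ∈ l.support, (1 / 2 : ℝ) ^ i := by
          rw [Finset.mul_sum]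
          refine Finset.sum_congr rfl fun i _ => ?_
          rw [show (1 / 2 : ℝ) ^ i = 2 ^ i * (1 / 4) ^ i by rw [← mul_pow]; norm_num]
          ring
      _ ≤ δ / 2 * ‖x‖ * 2 := by
          gcongr
          exact (summable_geometric_two.sum_le_tsum _ fun _ _ => by positivity).trans_eq
            tsum_geometric_two
      _ = δ * ‖x‖ := by ring
  exact closure_minimal hspan
    (isClosed_le S.continuous.norm (continuous_const.mul continuous_norm)) hx

end IsTriangularSystem

theorem exists_isTriangularSystem {Z : Submodule ℂ E} (hZ : IsInfDimClosed Z) (P : ℕ → E → Prop)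
    (hP : ∀ n (V : Submodule ℂ E), IsInfDimClosed V → V ≤ Z → ∃ x ∈ V, ‖x‖ = 1 ∧ P n x) :
    ∃ z f, IsTriangularSystem z f ∧ ∀ n, P n (z n) := by
  choose x hxV hx1 hPx using
    fun n (V : {V : Submodule ℂ E // IsInfDimClosed V ∧ V ≤ Z}) => hP n V.1 V.2.1 V.2.2
  choose g hg1 hgx using fun n V => exists_dual_vector ℂ (x n V) (by simp [hx1])
  let V : ℕ → {V : Submodule ℂ E // IsInfDimClosed V ∧ V ≤ Z} := fun n =>
    Nat.rec ⟨Z, hZ, le_rfl⟩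
      (fun n W => ⟨W.1 ⊓ LinearMap.ker (g n W : E →ₗ[ℂ] ℂ), IsInfDimClosed.inf_ker_s1 W.2.1 _,
        inf_le_left.trans W.2.2⟩) n
  have hanti : Antitone fun n => (V n).1 := antitone_nat_of_succ_le fun _ => inf_le_left
  refine ⟨fun n => x n (V n), fun n => g n (V n),
    ⟨fun n => hx1 n _, fun n => (hg1 n _).le, fun n => by simp [hgx, hx1], ?_⟩, fun n => hPx n _⟩
  intro n m hnm
  exact (hanti (Nat.succ_le_of_lt hnm) (hxV m (V m))).2

theorem exists_isInfDimClosed_norm_apply_le_of_strictlySingular_comp {S : E →L[ℂ] F}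
    {Z : Submodule ℂ E} (hZ : IsInfDimClosed Z) (hS : StrictlySingular (S.comp Z.subtypeL))
    {δ : ℝ} (hδ : 0 < δ) : ∃ N : Submodule ℂ E, IsInfDimClosed N ∧ ∀ x ∈ N, ‖S x‖ ≤ δ * ‖x‖ := by
  obtain ⟨z, f, hzf, hSz⟩ := exists_isTriangularSystem hZ (fun n x => ‖S x‖ < δ / 2 * (1 / 4) ^ n)
    fun n V hV hVZ => by
      obtain ⟨x, hx, hx1, hSx⟩ :=
        hS.exists_norm_eq_one (hV.comap_subtype hVZ) (c := δ / 2 * (1 / 4) ^ n) (by positivity)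
      exact ⟨x, hx, hx1, hSx⟩
  exact ⟨cSpan z, hzf.isInfDimClosed_cSpan, fun _ =>
    hzf.norm_apply_le_of_mem_cSpan S hδ.le fun n => (hSz n).le⟩

theorem HI.strictlySingular_of_forall_exists {S : E →L[ℂ] F} (hE : HI E)
    (h : ∀ δ > 0, ∃ N : Submodule ℂ E, IsInfDimClosed N ∧ ∀ x ∈ N, ‖S x‖ ≤ δ * ‖x‖) :
    StrictlySingular S := by
  intro M hM c hc
  obtain ⟨N, hN, hSN⟩ := h (c / 2) (by positivity)
  set ε := c / (2 * (‖S‖ + 1))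
  obtain ⟨u, huM, v, hvN, hu1, hv1, huv⟩ := hE M N hM hN ε (by positivity)
  refine ⟨u, huM, ?_⟩
  calc ‖S u‖ = ‖S v + S (u - v)‖ := by rw [map_sub, add_sub_cancel]
    _ ≤ c / 2 * ‖v‖ + ‖S‖ * ‖u - v‖ := norm_add_le_of_le (hSN v hvN) (S.le_opNorm _)
    _ ≤ c / 2 + ‖S‖ * ε := by rw [hv1, mul_one]; gcongr
    _ < c / 2 + (‖S‖ + 1) * ε := by gcongr; linarith
    _ = c * ‖u‖ := by simp only [ε, hu1]; field_simp; ring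

end

theorem statement1_general {Y W : Type*} [NormedAddCommGroup Y] [NormedSpace ℂ Y]
    [NormedAddCommGroup W] [NormedSpace ℂ W]
    (hY : HI Y) (S : Y →L[ℂ] W) (Z : Submodule ℂ Y) (hZ : IsInfDimClosed Z) :
    StrictlySingular S ↔ StrictlySingular (S.comp Z.subtypeL) :=
  ⟨fun hS => hS.comp_subtypeL hZ.1, fun hS => hY.strictlySingular_of_forall_exists fun _ hδ =>
    exists_isInfDimClosed_norm_apply_le_of_strictlySingular_comp hZ hS hδ⟩

theorem statement1 {Y W : Type*} [NormedAddCommGroup Y] [NormedSpace ℂ Y] [CompleteSpace Y]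
    [NormedAddCommGroup W] [NormedSpace ℂ W] [CompleteSpace W]
    (hY : HI Y) (S : Y →L[ℂ] W) (Z : Submodule ℂ Y) (hZ : IsInfDimClosed Z) :
    StrictlySingular S ↔ StrictlySingular (S.comp Z.subtypeL) :=
  statement1_general hY S Z hZ
end
end

section
/- Let Y be a hereditarily indecomposable Banach space, W a Banach space, S : Y → W a bounded operator. Suppose there exist an infinite-dimensional closed subspace Y' ⊆ Y and c > 0 with ‖S y‖ ≥ c‖y‖ for all y ∈ Y', and an infinite-dimensional closed subspace Z' ⊆ Y with ‖S z‖ ≤ ε‖z‖ for all z ∈ Z', where ε < c/(1 + ‖S‖). Then a contradiction follows. -/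
open Filter Topology

noncomputable section

variable {E F : Type*}

theorem statement2 {Y W : Type*} [NormedAddCommGroup Y] [NormedSpace ℂ Y] [CompleteSpace Y]
    [NormedAddCommGroup W] [NormedSpace ℂ W] [CompleteSpace W]
    (hY : HI Y) (S : Y →L[ℂ] W) (Y' Z' : Submodule ℂ Y)
    (hY' : IsInfDimClosed Y') (hZ' : IsInfDimClosed Z') (c ε : ℝ) (hc : 0 < c)
    (hlow : ∀ y ∈ Y', c * ‖y‖ ≤ ‖S y‖) (hup : ∀ z ∈ Z', ‖S z‖ ≤ ε * ‖z‖)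
    (hε : ε < c / (1 + ‖S‖)) : False := by
  
  have hS0 : (0:ℝ) ≤ ‖S‖ := norm_nonneg _
  have hden : (0:ℝ) < 1 + ‖S‖ := by linarith
  have hεc : ε < c := lt_of_lt_of_le hε (by
    rw [div_le_iff₀ hden]; nlinarith)
  set δ : ℝ := (c - ε) / (1 + ‖S‖) with hδdef
  have hδ : 0 < δ := div_pos (by linarith) hden
  obtain ⟨y, hyY, z, hzZ, hy1, hz1, hyz⟩ := hY Y' Z' hY' hZ' δ hδ
  have h1 : c ≤ ‖S y‖ := by simpa [hy1] using hlow y hyY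
  have h2 : ‖S z‖ ≤ ε := by simpa [hz1] using hup z hzZ
  have h3 : ‖S y - S z‖ ≤ ‖S‖ * δ := by
    calc ‖S y - S z‖ = ‖S (y - z)‖ := by rw [map_sub]
    _ ≤ ‖S‖ * ‖y - z‖ := S.le_opNorm _
    _ ≤ ‖S‖ * δ := by exact mul_le_mul_of_nonneg_left hyz hS0
  have h4 : ‖S y‖ ≤ ‖S‖ * δ + ε := by
    calc ‖S y‖ = ‖(S y - S z) + S z‖ := by rw [sub_add_cancel]
    _ ≤ ‖S y - S z‖ + ‖S z‖ := norm_add_le _ _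
    _ ≤ ‖S‖ * δ + ε := add_le_add h3 h2
  have hδeq : δ * (1 + ‖S‖) = c - ε := div_mul_cancel₀ _ hden.ne'
  have h5 : ‖S‖ * δ + ε < c := by nlinarith
  linarith
end
end

section
/- Let (yᵢ) and (zᵢ) be normalized basic sequences with basis constant 2 in a Banach space X with ∑ᵢ ‖yᵢ - zᵢ‖ < ∞. Let (y'ₖ) be a normalized block basic sequence of (yᵢ), and let z'ₖ be the vector with the same coordinates with respect to (zᵢ) as y'ₖ has with respect to (yᵢ). Then z'ₖ ≠ 0 for all but finitely many k, and ∑ₖ ‖y'ₖ - z'ₖ/‖z'ₖ‖‖ < ∞ (after discarding finitely many terms). -/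
/-!
Since `(yᵢ)` is normalized with basis constant 2, each coefficient of a normalized block is
bounded by 4: it is the difference of two partial sums, each of norm at most 2. Hence
`‖y'ₖ - z'ₖ‖ ≤ 4 ∑_{i ∈ Fₖ} ‖yᵢ - zᵢ‖`, and since the blocks are disjoint these bounds are
summable. In particular `‖z'ₖ‖ → 1`, and normalizing `z'ₖ` at most doubles its distance to the
unit vector `y'ₖ`.
-/

open Filter Topology

noncomputable section

variable {E F : Type*}

open Finset NormedSpace Function

section

variable [NormedAddCommGroup E] [NormedSpace ℂ E]

theorem IsNBasic2.norm_coeff_le {y : ℕ → E} (hy : IsNBasic2 y) (b : ℕ → ℂ) {i n : ℕ}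
    (hin : i < n) : ‖b i‖ ≤ 4 * ‖∑ j ∈ range n, b j • y j‖ :=
  calc ‖b i‖ = ‖∑ j ∈ range (i + 1), b j • y j - ∑ j ∈ range i, b j • y j‖ := by
        rw [sum_range_succ, add_sub_cancel_left, norm_smul, hy.1, mul_one]
    _ ≤ ‖∑ j ∈ range (i + 1), b j • y j‖ + ‖∑ j ∈ range i, b j • y j‖ := norm_sub_le _ _
    _ ≤ 4 * ‖∑ j ∈ range n, b j • y j‖ := by linarith [hy.2 b (i + 1) n hin, hy.2 b i n hin.le]

theorem IsNBasic2.norm_coeff_le_of_mem {y : ℕ → E} (hy : IsNBasic2 y) (a : ℕ → ℂ)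
    {s : Finset ℕ} {i : ℕ} (hi : i ∈ s) : ‖a i‖ ≤ 4 * ‖∑ j ∈ s, a j • y j‖ := by
  obtain ⟨n, hsn⟩ := exists_nat_subset_range s
  have hsum : ∑ j ∈ range n, (if j ∈ s then a j else 0) • y j = ∑ j ∈ s, a j • y j := by
    simp only [ite_smul, zero_smul, sum_ite_mem, inter_eq_right.2 hsn]
  simpa only [hi, if_true, hsum] using
    hy.norm_coeff_le (fun j => if j ∈ s then a j else 0) (mem_range.1 (hsn hi))

end

theorem norm_sum_smul_sub_sum_smul_le {𝕜 V ι : Type*} [NormedField 𝕜] [NormedAddCommGroup V]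
    [NormedSpace 𝕜 V] (s : Finset ι) (a : ι → 𝕜) (y z : ι → V) {C : ℝ}
    (ha : ∀ i ∈ s, ‖a i‖ ≤ C) :
    ‖∑ i ∈ s, a i • y i - ∑ i ∈ s, a i • z i‖ ≤ C * ∑ i ∈ s, ‖y i - z i‖ := by
  rw [← sum_sub_distrib, mul_sum]
  refine (norm_sum_le _ _).trans (sum_le_sum fun i hi => ?_)
  rw [← smul_sub, norm_smul]
  exact mul_le_mul_of_nonneg_right (ha i hi) (norm_nonneg _)

theorem lt_of_mem_of_mem_of_succ {F : ℕ → Finset ℕ} (hF : ∀ k, (F k).Nonempty)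
    (hsucc : ∀ k i j, i ∈ F k → j ∈ F (k + 1) → i < j) {k l : ℕ} (hkl : k < l) {i j : ℕ}
    (hi : i ∈ F k) (hj : j ∈ F l) : i < j := by
  induction l, hkl using Nat.le_induction generalizing j with
  | base => exact hsucc k i j hi hj
  | succ l _ ih =>
    obtain ⟨m, hm⟩ := hF l
    exact (ih hm).trans (hsucc l m j hm hj)

theorem pairwise_disjoint_of_succ {F : ℕ → Finset ℕ} (hF : ∀ k, (F k).Nonempty)
    (hsucc : ∀ k i j, i ∈ F k → j ∈ F (k + 1) → i < j) : Pairwise (Disjoint on F) := by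
  intro k l hkl
  refine disjoint_left.2 fun i hik hil => ?_
  rcases hkl.lt_or_gt with h | h
  · exact lt_irrefl i (lt_of_mem_of_mem_of_succ hF hsucc h hik hil)
  · exact lt_irrefl i (lt_of_mem_of_mem_of_succ hF hsucc h hil hik)

theorem Summable.sum_of_pairwise_disjoint {ι : Type*} {f : ι → ℝ} (hf0 : ∀ i, 0 ≤ f i)
    (hf : Summable f) {F : ℕ → Finset ι} (hF : Pairwise (Disjoint on F)) :
    Summable fun k => ∑ i ∈ F k, f i := by
  classical
  refine summable_of_sum_range_le (c := ∑' i, f i) (fun k => sum_nonneg fun i _ => hf0 i)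
    fun n => ?_
  rw [← sum_biUnion fun k _ l _ hkl => hF hkl]
  exact hf.sum_le_tsum _ fun i _ => hf0 i

theorem norm_sub_normalize_le {V : Type*} [NormedAddCommGroup V] [NormedSpace ℝ V] {u : V}
    (hu : ‖u‖ = 1) (v : V) : ‖u - normalize v‖ ≤ 2 * ‖u - v‖ := by
  have hv : ‖v - normalize v‖ ≤ ‖u - v‖ := by
    rcases eq_or_ne v 0 with rfl | hv0
    · simp [normalize_zero_eq_zero]
    calc ‖v - normalize v‖ = ‖(‖v‖ - 1) • normalize v‖ := by
          rw [sub_smul, norm_smul_normalize, one_smul]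
      _ = |‖u‖ - ‖v‖| := by
          rw [norm_smul, norm_normalize hv0, mul_one, Real.norm_eq_abs, hu, abs_sub_comm]
      _ ≤ ‖u - v‖ := abs_norm_sub_norm_le u v
  calc ‖u - normalize v‖ ≤ ‖u - v‖ + ‖v - normalize v‖ := norm_sub_le_norm_sub_add_norm_sub _ _ _
    _ ≤ 2 * ‖u - v‖ := by linarith

theorem statement4_general {X : Type*} [NormedAddCommGroup X] [NormedSpace ℂ X]
    (y z : ℕ → X) (hy : IsNBasic2 y)
    (hsim : Summable fun i => ‖y i - z i‖)
    (a : ℕ → ℂ) (F : ℕ → Finset ℕ) (hF : ∀ k, (F k).Nonempty)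
    (hsucc : ∀ k i j, i ∈ F k → j ∈ F (k + 1) → i < j)
    (y' : ℕ → X) (hy'def : ∀ k, y' k = ∑ i ∈ F k, a i • y i)
    (hy'norm : ∀ k, ‖y' k‖ = 1)
    (z' : ℕ → X) (hz'def : ∀ k, z' k = ∑ i ∈ F k, a i • z i) :
    ∃ N : ℕ, (∀ k ≥ N, z' k ≠ 0) ∧
      Summable (fun k => ‖y' (k + N) - (‖z' (k + N)‖⁻¹ : ℝ) • z' (k + N)‖) := by
  have hcoef : ∀ k, ∀ i ∈ F k, ‖a i‖ ≤ 4 := fun k i hi => by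
    simpa [← hy'def, hy'norm] using hy.norm_coeff_le_of_mem a hi
  have hdist : Summable fun k => ‖y' k - z' k‖ := by
    refine .of_nonneg_of_le (fun k => norm_nonneg _) (fun k => ?_)
      ((hsim.sum_of_pairwise_disjoint (fun i => norm_nonneg _)
        (pairwise_disjoint_of_succ hF hsucc)).mul_left 4)
    rw [hy'def, hz'def]
    exact norm_sum_smul_sub_sum_smul_le _ _ _ _ (hcoef k)
  obtain ⟨N, hN⟩ := eventually_atTop.1 <|
    hdist.tendsto_atTop_zero.eventually (eventually_lt_nhds one_pos)
  refine ⟨N, fun k hk hzk => ?_, ?_⟩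
  · simpa [hzk, hy'norm] using hN k hk
  · exact .of_nonneg_of_le (fun k => norm_nonneg _)
      (fun k => norm_sub_normalize_le (hy'norm (k + N)) (z' (k + N)))
      (((summable_nat_add_iff N).2 hdist).mul_left 2)

theorem statement4 {X : Type*} [NormedAddCommGroup X] [NormedSpace ℂ X] [CompleteSpace X]
    (y z : ℕ → X) (hy : IsNBasic2 y) (hz : IsNBasic2 z)
    (hsim : Summable fun i => ‖y i - z i‖)
    (a : ℕ → ℂ) (F : ℕ → Finset ℕ) (hF : ∀ k, (F k).Nonempty)
    (hsucc : ∀ k i j, i ∈ F k → j ∈ F (k + 1) → i < j)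
    (y' : ℕ → X) (hy'def : ∀ k, y' k = ∑ i ∈ F k, a i • y i)
    (hy'norm : ∀ k, ‖y' k‖ = 1)
    (z' : ℕ → X) (hz'def : ∀ k, z' k = ∑ i ∈ F k, a i • z i) :
    ∃ N : ℕ, (∀ k ≥ N, z' k ≠ 0) ∧
      Summable (fun k => ‖y' (k + N) - (‖z' (k + N)‖⁻¹ : ℝ) • z' (k + N)‖) :=
  statement4_general y z hy hsim a F hF hsucc y' hy'def hy'norm z' hz'def
end
end

section
/- Let X be a hereditarily indecomposable Banach space and let (yᵢ) and (zᵢ) be two normalized block basic sequences of a fixed normalized basic sequence (eᵢ) in X with constant 2. Then there exist normalized block basic sequences (y'ₖ) of (yᵢ) and (z'ₖ) of (zᵢ) such that ∑ₖ ‖y'ₖ - z'ₖ‖ < ∞. -/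
open Filter Topology

noncomputable section

variable {E F : Type*}

lemma blocks_lt {F : ℕ → Finset ℕ} (hne : ∀ k, (F k).Nonempty)
    (hord : ∀ k i j, i ∈ F k → j ∈ F (k+1) → i < j) :
    ∀ d k i j, i ∈ F k → j ∈ F (k + d + 1) → i < j := by
  intro d
  induction d with
  | zero => exact fun k i j hi hj => hord k i j hi hj
  | succ d ih =>
    intro k i j hi hj
    obtain ⟨m, hm⟩ := hne (k + d + 1)
    exact (ih k i m hi hm).trans (hord _ m j hm hj)

lemma blocks_inj {F : ℕ → Finset ℕ} (hne : ∀ k, (F k).Nonempty)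
    (hord : ∀ k i j, i ∈ F k → j ∈ F (k+1) → i < j)
    {k l i : ℕ} (hk : i ∈ F k) (hl : i ∈ F l) : k = l := by
  by_contra h
  rcases Nat.lt_or_ge k l with h' | h'
  · have := blocks_lt hne hord (l - k - 1) k i i hk (by rwa [show k + (l-k-1) + 1 = l by omega])
    omega
  · have h'' : l < k := by omega
    have := blocks_lt hne hord (k - l - 1) l i i hl (by rwa [show l + (k-l-1) + 1 = k by omega])
    omega

lemma nbasic_li {X : Type*} [NormedAddCommGroup X] [NormedSpace ℂ X] {e : ℕ → X}
    (he : IsNBasic2 e) : LinearIndependent ℂ e := by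
  rw [linearIndependent_iff'']
  intro s g hg hsum m
  have key : ∀ m, ‖∑ i ∈ Finset.range m, g i • e i‖ = 0 := by
    intro m
    set n := max m (s.sup id + 1) with hn
    have hsub : s ⊆ Finset.range n := by
      intro i hi
      have : i ≤ s.sup id := Finset.le_sup (f := id) hi
      simp only [Finset.mem_range]; omega
    have h0 : ∑ i ∈ Finset.range n, g i • e i = 0 := by
      rw [← Finset.sum_subset hsub (fun i _ hi => by rw [hg i hi, zero_smul])]
      exact hsum
    have := he.2 g m n (le_max_left _ _)
    rw [h0, norm_zero, mul_zero] at this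
    exact le_antisymm this (norm_nonneg _)
  have h1 : g m • e m = (∑ i ∈ Finset.range (m+1), g i • e i) - ∑ i ∈ Finset.range m, g i • e i := by
    rw [Finset.sum_range_succ]; abel
  have h2 : ‖g m • e m‖ = 0 := by
    rw [h1]
    refine le_antisymm ?_ (norm_nonneg _)
    calc ‖_ - _‖ ≤ ‖∑ i ∈ Finset.range (m+1), g i • e i‖ + ‖∑ i ∈ Finset.range m, g i • e i‖ :=
      norm_sub_le _ _
    _ = 0 := by rw [key, key]; ring
  rw [norm_smul, he.1 m, mul_one, norm_eq_zero] at h2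
  exact h2

lemma block_li {X : Type*} [NormedAddCommGroup X] [NormedSpace ℂ X] {e y : ℕ → X}
    (he : LinearIndependent ℂ e) (hb : IsBlockOf y e) : LinearIndependent ℂ y := by
  classical
  obtain ⟨a, F, hne, hord, hrep, hnz⟩ := hb
  rw [linearIndependent_iff']
  intro s g hsum k hk
  set c : ℕ → (ℕ →₀ ℂ) := fun k => ∑ i ∈ F k, Finsupp.single i (a i) with hc
  have hcy : ∀ k, Finsupp.linearCombination ℂ e (c k) = y k := by
    intro k
    rw [hc, hrep k]
    simp [Finsupp.linearCombination_single]
  set l : ℕ →₀ ℂ := ∑ k ∈ s, g k • c k with hl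
  have hl0 : l = 0 := by
    refine linearIndependent_iff.mp he l ?_
    rw [hl, map_sum]
    simp only [map_smul, hcy]
    exact hsum
  have hex : ∃ i₀ ∈ F k, a i₀ ≠ 0 := by
    by_contra h
    push_neg at h
    exact hnz k (by rw [hrep k]; exact Finset.sum_eq_zero fun i hi => by rw [h i hi, zero_smul])
  obtain ⟨i₀, hi₀, ha₀⟩ := hex
  have hck : ∀ k', (c k') i₀ = if i₀ ∈ F k' then a i₀ else 0 := by
    intro k'
    rw [hc]
    rw [Finsupp.finset_sum_apply]
    simp [Finsupp.single_apply]
  have hli : l i₀ = g k * a i₀ := by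
    rw [hl, Finsupp.finset_sum_apply]
    simp only [Finsupp.smul_apply, smul_eq_mul]
    rw [Finset.sum_eq_single k]
    · rw [hck, if_pos hi₀]
    · intro k' _ hkk
      rw [hck, if_neg, mul_zero]
      intro hmem
      exact hkk (blocks_inj hne hord hmem hi₀)
    · intro h; exact absurd hk h
  rw [hl0] at hli
  simp only [Finsupp.coe_zero, Pi.zero_apply] at hli
  rcases mul_eq_zero.mp hli.symm with h | h
  · exact h
  · exact absurd h ha₀

lemma cSpan_not_fd {X : Type*} [NormedAddCommGroup X] [NormedSpace ℂ X] {y : ℕ → X}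
    (hy : LinearIndependent ℂ y) : ¬ FiniteDimensional ℂ (cSpan y) := by
  intro hfd
  set w : ℕ → cSpan y := fun i => ⟨y i, mem_cSpan y i⟩ with hw
  have hwli : LinearIndependent ℂ w := by
    apply LinearIndependent.of_comp (cSpan y).subtype
    exact hy
  have h0 : Module.finrank ℂ (cSpan y) = 0 := hwli.finrank_eq_zero_of_infinite
  have : Subsingleton (cSpan y) := Module.finrank_zero_iff.mp h0
  exact hwli.ne_zero 0 (Subsingleton.elim _ _)

lemma approx_lemma {X : Type*} [NormedAddCommGroup X] [NormedSpace ℂ X] {w : ℕ → X} {u : X}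
    (hu : u ∈ cSpan w) (hu1 : ‖u‖ = 1) {δ : ℝ} (hδ : 0 < δ) (hδ1 : δ < 1) :
    ∃ (s : Finset ℕ) (b : ℕ → ℂ), s.Nonempty ∧ ‖∑ i ∈ s, b i • w i‖ = 1 ∧
      ‖∑ i ∈ s, b i • w i - u‖ ≤ 2 * δ := by
  have hmem : u ∈ closure ((Submodule.span ℂ (Set.range w) : Submodule ℂ X) : Set X) := hu
  rw [Metric.mem_closure_iff] at hmem
  obtain ⟨x, hx, hxu⟩ := hmem δ hδ
  rw [SetLike.mem_coe, Finsupp.mem_span_range_iff_exists_finsupp] at hx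
  obtain ⟨cf, hcf⟩ := hx
  rw [Finsupp.sum] at hcf
  have hxu' : ‖x - u‖ < δ := by rwa [← dist_eq_norm, dist_comm]
  have hxn : 1 - δ ≤ ‖x‖ := by
    have h := abs_norm_sub_norm_le x u
    rw [hu1] at h
    have := abs_le.mp (h.trans hxu'.le)
    linarith
  have hxpos : 0 < ‖x‖ := by linarith
  refine ⟨cf.support, fun i => (‖x‖⁻¹ : ℂ) * cf i, ?_, ?_, ?_⟩
  · rcases Finset.eq_empty_or_nonempty cf.support with h | h
    · exfalso
      rw [h, Finset.sum_empty] at hcf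
      rw [← hcf] at hxpos
      simp at hxpos
    · exact h
  · have hsum : ∑ i ∈ cf.support, ((‖x‖⁻¹ : ℂ) * cf i) • w i = (‖x‖⁻¹ : ℂ) • x := by
      rw [← hcf, Finset.smul_sum]
      exact Finset.sum_congr rfl fun i _ => by rw [mul_smul]
    rw [hsum, norm_smul]
    simp [abs_of_pos (inv_pos.mpr hxpos), inv_mul_cancel₀ (ne_of_gt hxpos)]
  · have hsum : ∑ i ∈ cf.support, ((‖x‖⁻¹ : ℂ) * cf i) • w i = (‖x‖⁻¹ : ℂ) • x := by
      rw [← hcf, Finset.smul_sum]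
      exact Finset.sum_congr rfl fun i _ => by rw [mul_smul]
    rw [hsum]
    have h1 : ‖(‖x‖⁻¹ : ℂ) • x - x‖ ≤ δ := by
      have : (‖x‖⁻¹ : ℂ) • x - x = ((‖x‖⁻¹ : ℂ) - 1) • x := by rw [sub_smul, one_smul]
      rw [this, norm_smul]
      have h2 : ‖(‖x‖⁻¹ : ℂ) - 1‖ = |‖x‖⁻¹ - 1| := by
        rw [show ((‖x‖⁻¹ : ℂ) - 1) = ((‖x‖⁻¹ - 1 : ℝ) : ℂ) by push_cast; ring]
        exact Complex.norm_real _
      rw [h2, ← abs_of_pos hxpos, ← abs_mul, sub_mul, abs_of_pos hxpos,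
        inv_mul_cancel₀ (ne_of_gt hxpos)]
      have h3 : |1 - ‖x‖| ≤ δ := by
        have h := abs_norm_sub_norm_le x u
        rw [hu1, abs_sub_comm] at h
        exact h.trans hxu'.le
      simpa using h3
    calc ‖(‖x‖⁻¹ : ℂ) • x - u‖ ≤ ‖(‖x‖⁻¹ : ℂ) • x - x‖ + ‖x - u‖ := by
          have := norm_sub_le_norm_sub_add_norm_sub ((‖x‖⁻¹ : ℂ) • x) x u
          exact this
    _ ≤ δ + δ := add_le_add h1 hxu'.le
    _ = 2 * δ := by ring
lemma key_lemma {X : Type*} [NormedAddCommGroup X] [NormedSpace ℂ X] (hX : HI X)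
    {y z : ℕ → X} (hy : LinearIndependent ℂ y) (hz : LinearIndependent ℂ z)
    (N : ℕ) {ε : ℝ} (hε : 0 < ε) :
    ∃ (sy : Finset ℕ) (ay : ℕ → ℂ) (sz : Finset ℕ) (az : ℕ → ℂ),
      sy.Nonempty ∧ sz.Nonempty ∧ (∀ i ∈ sy, N ≤ i) ∧ (∀ i ∈ sz, N ≤ i) ∧
      ‖∑ i ∈ sy, ay i • y i‖ = 1 ∧ ‖∑ i ∈ sz, az i • z i‖ = 1 ∧
      ‖(∑ i ∈ sy, ay i • y i) - ∑ i ∈ sz, az i • z i‖ ≤ 5 * ε := by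
  classical
  set δ : ℝ := min ε (1/2) with hδdef
  have hδpos : 0 < δ := lt_min hε (by norm_num)
  have hδ1 : δ < 1 := lt_of_le_of_lt (min_le_right _ _) (by norm_num)
  have hδε : δ ≤ ε := min_le_left _ _
  have hMy : IsInfDimClosed (tailSpan y N) :=
    ⟨Submodule.isClosed_topologicalClosure _,
      cSpan_not_fd (hy.comp (· + N) (fun a b h => by have : a + N = b + N := h; omega))⟩
  have hMz : IsInfDimClosed (tailSpan z N) :=
    ⟨Submodule.isClosed_topologicalClosure _,
      cSpan_not_fd (hz.comp (· + N) (fun a b h => by have : a + N = b + N := h; omega))⟩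
  obtain ⟨u, hu, v, hv, hu1, hv1, huv⟩ := hX _ _ hMy hMz ε hε
  obtain ⟨su, bu, hsune, hbu1, hbuu⟩ := approx_lemma (w := fun i => y (i + N)) hu hu1 hδpos hδ1
  obtain ⟨sv, bv, hsvne, hbv1, hbvv⟩ := approx_lemma (w := fun i => z (i + N)) hv hv1 hδpos hδ1
  have hinj : ∀ s : Finset ℕ, Set.InjOn (· + N) s := fun s a _ b _ h => by have : a + N = b + N := h; omega
  refine ⟨su.image (· + N), fun j => bu (j - N), sv.image (· + N), fun j => bv (j - N),
    hsune.image _, hsvne.image _, ?_, ?_, ?_, ?_, ?_⟩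
  · intro i hi; obtain ⟨j, _, rfl⟩ := Finset.mem_image.mp hi; omega
  · intro i hi; obtain ⟨j, _, rfl⟩ := Finset.mem_image.mp hi; omega
  · rw [Finset.sum_image (hinj _)]
    simpa only [Nat.add_sub_cancel] using hbu1
  · rw [Finset.sum_image (hinj _)]
    simpa only [Nat.add_sub_cancel] using hbv1
  · rw [Finset.sum_image (hinj _), Finset.sum_image (hinj _)]
    simp only [Nat.add_sub_cancel]
    have heq : (∑ i ∈ su, bu i • y (i + N)) - ∑ i ∈ sv, bv i • z (i + N) =
        ((∑ i ∈ su, bu i • y (i + N)) - u) + (u - v) +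
          (v - ∑ i ∈ sv, bv i • z (i + N)) := by abel
    rw [heq]
    have h1 := norm_add₃_le (a := (∑ i ∈ su, bu i • y (i + N)) - u) (b := u - v)
      (c := v - ∑ i ∈ sv, bv i • z (i + N))
    have h2 : ‖v - ∑ i ∈ sv, bv i • z (i + N)‖ ≤ 2 * δ := by
      rw [norm_sub_rev]; exact hbvv
    have := h1.trans (add_le_add (add_le_add hbuu huv) h2)
    linarith
theorem statement6 {X : Type*} [NormedAddCommGroup X] [NormedSpace ℂ X] [CompleteSpace X]
    (hX : HI X) (e y z : ℕ → X) (he : IsNBasic2 e)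
    (hy : IsNBlockOf y e) (hz : IsNBlockOf z e) :
    ∃ y' z' : ℕ → X, IsNBlockOf y' y ∧ IsNBlockOf z' z ∧
      Summable (fun k => ‖y' k - z' k‖) := by
  classical
  have hel := nbasic_li he
  have hyl := block_li hel hy.1
  have hzl := block_li hel hz.1
  choose sy ay sz az hne1 hne2 hge1 hge2 hnorm1 hnorm2 hdiff using
    fun (N k : ℕ) => key_lemma hX hyl hzl N (ε := (1/2:ℝ)^k) (pow_pos (by norm_num) k)
  let Nf : ℕ → ℕ := fun k => Nat.rec 0 (fun k ih =>
      (sy ih k ∪ sz ih k).max' ((hne1 ih k).inl) + 1) k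
  have hNfs : ∀ k, Nf (k+1) = (sy (Nf k) k ∪ sz (Nf k) k).max' ((hne1 (Nf k) k).inl) + 1 :=
    fun k => rfl
  set Fy : ℕ → Finset ℕ := fun k => sy (Nf k) k with hFy
  set Fz : ℕ → Finset ℕ := fun k => sz (Nf k) k with hFz
  set cy : ℕ → ℕ → ℂ := fun k => ay (Nf k) k with hcy
  set cz : ℕ → ℕ → ℂ := fun k => az (Nf k) k with hcz
  have hney : ∀ k, (Fy k).Nonempty := fun k => hne1 _ _
  have hnez : ∀ k, (Fz k).Nonempty := fun k => hne2 _ _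
  have hlty : ∀ k, ∀ i ∈ Fy k, i < Nf (k+1) := by
    intro k i hi
    have h := Finset.le_max' (sy (Nf k) k ∪ sz (Nf k) k) i (Finset.mem_union_left _ hi)
    have h2 := hNfs k
    omega
  have hltz : ∀ k, ∀ i ∈ Fz k, i < Nf (k+1) := by
    intro k i hi
    have h := Finset.le_max' (sy (Nf k) k ∪ sz (Nf k) k) i (Finset.mem_union_right _ hi)
    have h2 := hNfs k
    omega
  have hordy : ∀ k i j, i ∈ Fy k → j ∈ Fy (k+1) → i < j :=
    fun k i j hi hj => lt_of_lt_of_le (hlty k i hi) (hge1 (Nf (k+1)) (k+1) j hj)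
  have hordz : ∀ k i j, i ∈ Fz k → j ∈ Fz (k+1) → i < j :=
    fun k i j hi hj => lt_of_lt_of_le (hltz k i hi) (hge2 (Nf (k+1)) (k+1) j hj)
  set Ay : ℕ → ℂ := fun i => if h : ∃ k, i ∈ Fy k then cy h.choose i else 0 with hAydef
  set Az : ℕ → ℂ := fun i => if h : ∃ k, i ∈ Fz k then cz h.choose i else 0 with hAzdef
  have hAy : ∀ k, ∀ i ∈ Fy k, Ay i = cy k i := by
    intro k i hi
    have hex : ∃ k, i ∈ Fy k := ⟨k, hi⟩
    rw [hAydef]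
    simp only
    rw [dif_pos hex]
    have hk : hex.choose = k := blocks_inj hney hordy hex.choose_spec hi
    rw [hk]
  have hAz : ∀ k, ∀ i ∈ Fz k, Az i = cz k i := by
    intro k i hi
    have hex : ∃ k, i ∈ Fz k := ⟨k, hi⟩
    rw [hAzdef]
    simp only
    rw [dif_pos hex]
    have hk : hex.choose = k := blocks_inj hnez hordz hex.choose_spec hi
    rw [hk]
  refine ⟨fun k => ∑ i ∈ Fy k, cy k i • y i, fun k => ∑ i ∈ Fz k, cz k i • z i,
    ⟨⟨Ay, Fy, hney, hordy, ?_, ?_⟩, ?_⟩, ⟨⟨Az, Fz, hnez, hordz, ?_, ?_⟩, ?_⟩, ?_⟩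
  · exact fun k => (Finset.sum_congr rfl fun i hi => by rw [hAy k i hi]).symm
  · intro k h0
    have h1 := hnorm1 (Nf k) k
    rw [show (∑ i ∈ sy (Nf k) k, ay (Nf k) k i • y i) = (0 : X) from h0, norm_zero] at h1
    norm_num at h1
  · exact fun k => hnorm1 (Nf k) k
  · exact fun k => (Finset.sum_congr rfl fun i hi => by rw [hAz k i hi]).symm
  · intro k h0
    have h1 := hnorm2 (Nf k) k
    rw [show (∑ i ∈ sz (Nf k) k, az (Nf k) k i • z i) = (0 : X) from h0, norm_zero] at h1
    norm_num at h1
  · exact fun k => hnorm2 (Nf k) k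
  · refine Summable.of_nonneg_of_le (fun k => norm_nonneg _) (fun k => hdiff (Nf k) k) ?_
    exact (summable_geometric_of_lt_one (by norm_num) (by norm_num)).mul_left 5
end
end

section
/- Let X be a Banach space and let (yᵢ), (y'ᵢ) be normalized basic sequences with constant 2, with ∑ᵢ ‖yᵢ - zᵢ‖ < ∞ for some normalized block basic sequence (zᵢ). For T : [y'] → X bounded, the two operators T∘p₁ and T∘p₂ obtained from two similar choices (y'¹ᵢ), (y'²ᵢ) of block sequences of (y'ᵢ) (i.e. ∑‖y'¹ᵢ - y'²ᵢ‖ < ∞) satisfy lim_{k→∞} ‖(T∘p₁ - T∘p₂)|_{[z^k]}‖ = 0, where pⱼ : [z] → [y'ʲ] maps zᵢ to y'ʲᵢ. -/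
/-! The difference `D = T ∘ p₁ - T ∘ p₂` sends `zᵢ` to `T (y¹ᵢ - y²ᵢ)`, of norm at most
`‖T‖ ‖y¹ᵢ - y²ᵢ‖`. The coefficient functionals of a basic sequence with constant 2 have norm at
most 4, so on `[z^k]` the operator `D` has norm at most `4 ‖T‖ ∑_{i ≥ k} ‖y¹ᵢ - y²ᵢ‖`, the tail
of a convergent series. -/

open Filter Topology

noncomputable section

variable {E F : Type*}

section

variable [NormedAddCommGroup E] [NormedSpace ℂ E] [NormedAddCommGroup F] [NormedSpace ℂ F]

theorem ContinuousLinearMap.norm_apply_le_of_mem_topologicalClosure (D : E →L[ℂ] F)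
    {S : Submodule ℂ E} {C : ℝ} (hS : ∀ v ∈ S, ‖D v‖ ≤ C * ‖v‖) {v : E}
    (hv : v ∈ S.topologicalClosure) : ‖D v‖ ≤ C * ‖v‖ :=
  closure_minimal hS (isClosed_le D.continuous.norm (continuous_const.mul continuous_norm)) hv

theorem mem_tailSpan_subtype {M : Submodule ℂ E} {z : ℕ → E} (hzM : ∀ i, z i ∈ M) {k : ℕ}
    {u : M} (hu : (u : E) ∈ tailSpan z k) :
    u ∈ tailSpan (fun i => (⟨z i, hzM i⟩ : M)) k := by
  have himage : ((↑) '' (Submodule.span ℂ (Set.range fun i => (⟨z (i + k), hzM _⟩ : M)) : Set M))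
      = (Submodule.span ℂ (Set.range fun i => z (i + k)) : Set E) := by
    change M.subtype '' _ = _
    rw [← Submodule.map_coe, Submodule.map_span, ← Set.range_comp]
    rfl
  rw [tailSpan, cSpan, ← SetLike.mem_coe, Submodule.topologicalClosure_coe,
    Topology.IsInducing.subtypeVal.closure_eq_preimage_closure_image, Set.mem_preimage]
  exact himage ▸ hu

namespace IsNBasic2

variable {z : ℕ → E}

theorem norm_coeff_le_s14 (hz : IsNBasic2 z) (a : ℕ → ℂ) {n j : ℕ} (hj : j < n) :
    ‖a j‖ ≤ 4 * ‖∑ i ∈ Finset.range n, a i • z i‖ := by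
  have hdiff : a j • z j = (∑ i ∈ Finset.range (j + 1), a i • z i)
      - ∑ i ∈ Finset.range j, a i • z i := by
    rw [Finset.sum_range_succ]; abel
  calc ‖a j‖ = ‖a j • z j‖ := by rw [norm_smul, hz.1 j, mul_one]
    _ ≤ ‖∑ i ∈ Finset.range (j + 1), a i • z i‖ + ‖∑ i ∈ Finset.range j, a i • z i‖ := by
        rw [hdiff]; exact norm_sub_le _ _
    _ ≤ 2 * ‖∑ i ∈ Finset.range n, a i • z i‖ + 2 * ‖∑ i ∈ Finset.range n, a i • z i‖ :=
        add_le_add (hz.2 a (j + 1) n hj) (hz.2 a j n hj.le)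
    _ = 4 * ‖∑ i ∈ Finset.range n, a i • z i‖ := by ring

theorem norm_coeff_le_of_linearCombination (hz : IsNBasic2 z) (l : ℕ →₀ ℂ) (j : ℕ) :
    ‖l j‖ ≤ 4 * ‖Finsupp.linearCombination ℂ z l‖ := by
  classical
  set n := l.support.sup id + 1
  have hsupp : l.support ⊆ Finset.range n := fun i hi =>
    Finset.mem_range.2 (Nat.lt_succ_of_le (Finset.le_sup (f := id) hi))
  by_cases hj : j < n
  · rw [Finsupp.linearCombination_apply, Finsupp.sum_of_support_subset l hsupp _ (by simp)]
    exact hz.norm_coeff_le_s14 l hj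
  · have : l j = 0 := Finsupp.notMem_support_iff.1 fun h => hj (Finset.mem_range.1 (hsupp h))
    rw [this, norm_zero]
    positivity

theorem subtype {M : Submodule ℂ E} (hz : IsNBasic2 z) (hzM : ∀ i, z i ∈ M) :
    IsNBasic2 (fun i => (⟨z i, hzM i⟩ : M)) := by
  refine ⟨fun i => hz.1 i, fun a m n hmn => ?_⟩
  simpa only [Submodule.coe_norm, Submodule.coe_sum, Submodule.coe_smul] using hz.2 a m n hmn

theorem norm_map_le_of_mem_span_tail (hz : IsNBasic2 z) (D : E →ₗ[ℂ] F) {d : ℕ → ℝ}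
    (hd : Summable d) (hDz : ∀ i, ‖D (z i)‖ ≤ d i) (k : ℕ) {v : E}
    (hv : v ∈ Submodule.span ℂ (Set.range fun i => z (i + k))) :
    ‖D v‖ ≤ 4 * (∑' i, d (i + k)) * ‖v‖ := by
  have hrange : (Set.range fun i => z (i + k)) = z '' Set.Ici k := by
    ext x; simp only [Set.mem_range, Set.mem_image, Set.mem_Ici]
    exact ⟨fun ⟨i, hi⟩ => ⟨i + k, by omega, hi⟩,
      fun ⟨j, hj, hx⟩ => ⟨j - k, by rw [Nat.sub_add_cancel hj, hx]⟩⟩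
  rw [hrange, Finsupp.mem_span_image_iff_linearCombination] at hv
  obtain ⟨l, hl, rfl⟩ := hv
  have hd0 : ∀ i, 0 ≤ d i := fun i => (norm_nonneg _).trans (hDz i)
  have htail : ∑ j ∈ l.support, d j ≤ ∑' i, d (i + k) := by
    rw [← Finset.sum_preimage (· + k) l.support (add_left_injective k).injOn d
      fun j hj hk => (hk ⟨j - k, Nat.sub_add_cancel (hl hj)⟩).elim]
    exact ((summable_nat_add_iff k).2 hd).sum_le_tsum _ fun i _ => hd0 _
  set v := Finsupp.linearCombination ℂ z l
  have hDv : D v = l.sum fun j c => c • D (z j) := by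
    rw [Finsupp.apply_linearCombination, Finsupp.linearCombination_apply]; rfl
  calc ‖D v‖ ≤ ∑ j ∈ l.support, ‖l j‖ * ‖D (z j)‖ := by
        rw [hDv]
        exact (norm_sum_le _ _).trans_eq (by simp only [norm_smul])
    _ ≤ ∑ j ∈ l.support, 4 * ‖v‖ * d j :=
        Finset.sum_le_sum fun j _ => mul_le_mul (hz.norm_coeff_le_of_linearCombination l j)
          (hDz j) (norm_nonneg _) (by positivity)
    _ = 4 * ‖v‖ * ∑ j ∈ l.support, d j := by rw [Finset.mul_sum]
    _ ≤ 4 * ‖v‖ * ∑' i, d (i + k) := by gcongr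
    _ = 4 * (∑' i, d (i + k)) * ‖v‖ := by ring

theorem norm_map_le_of_mem_tailSpan (hz : IsNBasic2 z) (D : E →L[ℂ] F) {d : ℕ → ℝ}
    (hd : Summable d) (hDz : ∀ i, ‖D (z i)‖ ≤ d i) (k : ℕ) {v : E} (hv : v ∈ tailSpan z k) :
    ‖D v‖ ≤ 4 * (∑' i, d (i + k)) * ‖v‖ :=
  D.norm_apply_le_of_mem_topologicalClosure
    (fun _ hw => hz.norm_map_le_of_mem_span_tail D.toLinearMap hd hDz k hw) hv

end IsNBasic2

end

theorem statement14_general {X : Type*} [NormedAddCommGroup X] [NormedSpace ℂ X]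
    (y' z y1 y2 : ℕ → X) (hz : IsNBasic2 z)
    (hsim12 : Summable fun i => ‖y1 i - y2 i‖)
    (h1 : cSpan y1 ≤ cSpan y') (h2 : cSpan y2 ≤ cSpan y')
    (T : cSpan y' →L[ℂ] X)
    (p1 : cSpan z →L[ℂ] cSpan y1) (p2 : cSpan z →L[ℂ] cSpan y2)
    (hp1 : ∀ i, (p1 ⟨z i, mem_cSpan z i⟩ : X) = y1 i)
    (hp2 : ∀ i, (p2 ⟨z i, mem_cSpan z i⟩ : X) = y2 i) :
    ∀ ε > 0, ∃ K : ℕ, ∀ k ≥ K, ∀ u : cSpan z, (u : X) ∈ tailSpan z k →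
      ‖T ⟨(p1 u : X), h1 (p1 u).2⟩ - T ⟨(p2 u : X), h2 (p2 u).2⟩‖ ≤ ε * ‖u‖ := by
  intro ε hε
  set D : cSpan z →L[ℂ] X := T ∘L inclCLM h1 ∘L p1 - T ∘L inclCLM h2 ∘L p2
  set d : ℕ → ℝ := fun i => ‖T‖ * ‖y1 i - y2 i‖
  have hDz : ∀ i, ‖D ⟨z i, mem_cSpan z i⟩‖ ≤ d i := fun i => by
    have hdiff : ‖inclCLM h1 (p1 ⟨z i, mem_cSpan z i⟩) - inclCLM h2 (p2 ⟨z i, mem_cSpan z i⟩)‖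
        = ‖y1 i - y2 i‖ := by
      rw [← hp1, ← hp2]; rfl
    simpa only [D, sub_apply, ContinuousLinearMap.comp_apply, ← map_sub, hdiff] using
      T.le_opNorm (inclCLM h1 (p1 ⟨z i, mem_cSpan z i⟩) - inclCLM h2 (p2 ⟨z i, mem_cSpan z i⟩))
  have hsmall : ∀ᶠ k in atTop, 4 * ∑' i, d (i + k) ≤ ε := by
    have h := (tendsto_sum_nat_add d).const_mul 4
    rw [mul_zero] at h
    exact h.eventually (ge_mem_nhds hε)
  obtain ⟨K, hK⟩ := eventually_atTop.1 hsmall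
  refine ⟨K, fun k hk u hu => ?_⟩
  calc ‖D u‖ ≤ 4 * (∑' i, d (i + k)) * ‖u‖ :=
        (hz.subtype (mem_cSpan z)).norm_map_le_of_mem_tailSpan D (hsim12.mul_left _) hDz k
          (mem_tailSpan_subtype (mem_cSpan z) hu)
    _ ≤ ε * ‖u‖ := mul_le_mul_of_nonneg_right (hK k hk) (norm_nonneg _)

theorem statement14 {X : Type*} [NormedAddCommGroup X] [NormedSpace ℂ X] [CompleteSpace X]
    (y' z y1 y2 : ℕ → X) (hy' : IsNBasic2 y') (hz : IsNBasic2 z)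
    (hy1 : IsNBlockOf y1 y') (hy2 : IsNBlockOf y2 y')
    (hsim12 : Summable fun i => ‖y1 i - y2 i‖)
    (hsimz : Summable fun i => ‖z i - y1 i‖)
    (h1 : cSpan y1 ≤ cSpan y') (h2 : cSpan y2 ≤ cSpan y')
    (T : cSpan y' →L[ℂ] X)
    (p1 : cSpan z →L[ℂ] cSpan y1) (p2 : cSpan z →L[ℂ] cSpan y2)
    (hp1 : ∀ i, (p1 ⟨z i, mem_cSpan z i⟩ : X) = y1 i)
    (hp2 : ∀ i, (p2 ⟨z i, mem_cSpan z i⟩ : X) = y2 i) :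
    ∀ ε > 0, ∃ K : ℕ, ∀ k ≥ K, ∀ u : cSpan z, (u : X) ∈ tailSpan z k →
      ‖T ⟨(p1 u : X), h1 (p1 u).2⟩ - T ⟨(p2 u : X), h2 (p2 u).2⟩‖ ≤ ε * ‖u‖ :=
  statement14_general y' z y1 y2 hz hsim12 h1 h2 T p1 p2 hp1 hp2
end
end
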